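/- Let n ≥ 3 and k ≥ 1, and let (x, c, u) be a combinatorial degenerated magic polygon D(n,k). For every offset r ∈ {1, …, k−1}, the sum S_r = ∑_{i=0}^{n−3} ∑_{t : Fin k} x t (i·k + r) of the labels at the r-th interior point of every edge not adjacent to the root, over all k polygons, equals (n−2)·k·(k²·(n−2)+k+2)/2. -/

import Mathlib

open Fin.NatCast

/-- The labeling function of a combinatorial degenerated magic polygon `D(n,k)`:
the labels `x t p` of the points on the `k` polygons (root vertex excluded)
together with the root label `c`. -/
def degMagicLabels (n k : ℕ) (x : Fin k → Fin (k * (n - 2) + 1) → ℕ) (c : ℕ) :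
    (Fin k × Fin (k * (n - 2) + 1)) ⊕ Unit → ℕ :=
  Sum.elim (fun q => x q.1 q.2) (fun _ => c)

/-- `(x, c, u)` is a combinatorial degenerated magic polygon `D(n,k)`:
(1) the `k²(n−2)+k+1` labels are exactly `1, …, k²(n−2)+k+1`, each occurring once;
(2) every edge sum `∑_{j=0}^{k} x t (i·k + j)`, for an edge not adjacent to the
root (`0 ≤ i ≤ n−3`), equals `u`;
(3) for every position `p`, the sum `(∑ t, x t p) + c` along the segment joining
the root vertex to the boundary of the largest polygon equals `u`. -/
def IsDegMagicPolygon (n k : ℕ) (x : Fin k → Fin (k * (n - 2) + 1) → ℕ) (c u : ℕ) : Prop :=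
  Function.Injective (degMagicLabels n k x c) ∧
  Set.range (degMagicLabels n k x c) = Set.Icc 1 (k ^ 2 * (n - 2) + k + 1) ∧
  (∀ t : Fin k, ∀ i ∈ Finset.range (n - 2),
    ∑ j ∈ Finset.range (k + 1), x t ((i * k + j : ℕ)) = u) ∧
  (∀ p : Fin (k * (n - 2) + 1), (∑ t : Fin k, x t p) + c = u)

/-!
Every segment from the root has sum `u`, so every position `p` carries the same total
`∑ t, x t p = u - c` over the `k` polygons. Counting the `k + 1` points of the first edge of all
`k` polygons once by edges and once by segments gives `k * u = (k + 1) * (u - c)`, i.e.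
`u = (k + 1) * c`, so each position carries `k * c`. Hence all labels add up to
`(k (n - 2) + 1) * k * c + c = N * c` with `N = k² (n - 2) + k + 1`, while they are `1, …, N`;
thus `2 c = N + 1`. The offset sum runs over `n - 2` positions, so it equals
`(n - 2) * k * c = (n - 2) * k * (N + 1) / 2`.
-/

open Finset

theorem sum_Icc_one_id_mul_two (N : ℕ) : (∑ m ∈ Icc 1 N, m) * 2 = N * (N + 1) := by
  have hIcc : ∑ m ∈ Icc 1 N, m = ∑ m ∈ range (N + 1), m := by
    rw [Nat.range_succ_eq_Icc_zero, Icc_eq_cons_Ioc N.zero_le, sum_cons,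
      ← Icc_add_one_left_eq_Ioc, zero_add, zero_add]
  rw [hIcc, sum_range_id_mul_two, Nat.add_sub_cancel, mul_comm]

theorem sum_mul_two_of_range_eq_Icc {α : Type*} [Fintype α] {f : α → ℕ} {N : ℕ}
    (hf : Function.Injective f) (hrange : Set.range f = Set.Icc 1 N) :
    (∑ a, f a) * 2 = N * (N + 1) := by
  have himage : univ.image f = Icc 1 N := by
    apply coe_injective
    rw [coe_image, coe_univ, Set.image_univ, hrange, coe_Icc]
  rw [← sum_Icc_one_id_mul_two, ← himage, sum_image fun a _ b _ hab => hf hab]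

namespace IsDegMagicPolygon

variable {n k : ℕ} {x : Fin k → Fin (k * (n - 2) + 1) → ℕ} {c u : ℕ}

theorem magicSum_eq (h : IsDegMagicPolygon n k x c u) (hn : 3 ≤ n) : u = (k + 1) * c := by
  have hfirst : 0 ∈ range (n - 2) := mem_range.2 (by omega)
  have hbyEdges : ∑ j ∈ range (k + 1), ∑ t, x t ((0 * k + j : ℕ)) = k * u := by
    rw [sum_comm, sum_congr rfl fun t _ => h.2.2.1 t 0 hfirst]
    simp
  have hbySegments : ∑ j ∈ range (k + 1), (∑ t, x t ((0 * k + j : ℕ)) + c) = (k + 1) * u := by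
    simp [h.2.2.2]
  rw [sum_add_distrib, hbyEdges, sum_const, card_range, smul_eq_mul] at hbySegments
  linarith

theorem sum_position (h : IsDegMagicPolygon n k x c u) (hn : 3 ≤ n)
    (p : Fin (k * (n - 2) + 1)) : ∑ t, x t p = k * c := by
  have := h.2.2.2 p
  rw [h.magicSum_eq hn] at this
  linarith

theorem sum_labels (h : IsDegMagicPolygon n k x c u) (hn : 3 ≤ n) :
    ∑ a, degMagicLabels n k x c a = (k ^ 2 * (n - 2) + k + 1) * c := by
  rw [Fintype.sum_sum_type, Fintype.sum_prod_type, sum_comm]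
  simp only [degMagicLabels, Sum.elim_inl, Sum.elim_inr, h.sum_position hn, sum_const,
    card_univ, Fintype.card_fin, Fintype.card_unit, smul_eq_mul, one_mul]
  ring

theorem two_mul_root (h : IsDegMagicPolygon n k x c u) (hn : 3 ≤ n) :
    2 * c = k ^ 2 * (n - 2) + k + 2 := by
  have hgauss := sum_mul_two_of_range_eq_Icc h.1 h.2.1
  rw [h.sum_labels hn, mul_assoc] at hgauss
  have := Nat.eq_of_mul_eq_mul_left (Nat.succ_pos _) hgauss
  omega

end IsDegMagicPolygon

theorem degMagicPolygon_offsetSum_general (n k : ℕ) (hn : 3 ≤ n)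
    (x : Fin k → Fin (k * (n - 2) + 1) → ℕ) (c u : ℕ)
    (h : IsDegMagicPolygon n k x c u) :
    ∀ r, 1 ≤ r → r ≤ k - 1 →
      ∑ i ∈ Finset.range (n - 2), ∑ t : Fin k, x t ((i * k + r : ℕ)) =
        (n - 2) * k * (k ^ 2 * (n - 2) + k + 2) / 2 := by
  intro r _ _
  calc ∑ i ∈ range (n - 2), ∑ t : Fin k, x t ((i * k + r : ℕ))
      = (n - 2) * k * c := by simp [h.sum_position hn, mul_assoc]
    _ = (n - 2) * k * (2 * c) / 2 := by
        rw [mul_comm 2 c, ← mul_assoc, Nat.mul_div_cancel _ two_pos]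
    _ = (n - 2) * k * (k ^ 2 * (n - 2) + k + 2) / 2 := by rw [h.two_mul_root hn]

theorem degMagicPolygon_offsetSum (n k : ℕ) (hn : 3 ≤ n) (hk : 1 ≤ k)
    (x : Fin k → Fin (k * (n - 2) + 1) → ℕ) (c u : ℕ)
    (h : IsDegMagicPolygon n k x c u) :
    ∀ r, 1 ≤ r → r ≤ k - 1 →
      ∑ i ∈ Finset.range (n - 2), ∑ t : Fin k, x t ((i * k + r : ℕ)) =
        (n - 2) * k * (k ^ 2 * (n - 2) + k + 2) / 2 :=
  degMagicPolygon_offsetSum_general n k hn x c u h
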